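/- Given an array (b_{i,0}, b_{i,1})_{i<ω} such that: the rows (b̄_i)_{i<ω} form an indiscernible sequence, {φ(x;b_{i,0}) : i<ω} is consistent, {φ(x;b_{i,1}) : i<ω} is 2-inconsistent, and b_{i,0} ≡_{b̄_{<i}} b_{i,1} for all i; define c_{i,0} = b_{2i+1,0} and c_{i,1} = b_{2i,1}. Then the new array (c_{i,0}, c_{i,1})_{i<ω} satisfies: {φ(x;c_{i,0}) : i<ω} is consistent, {φ(x;c_{i,1}) : i<ω} is 2-inconsistent, (c̄_i)_{i<ω} is an indiscernible sequence, c_{i,0} ≡_{c̄_{<i}} c_{i,1} for all i, and for each i the sequence (c_{k,0})_{k≥i} is indiscernible over c̄_{<i} ∪ {c_{i,1}}. -/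

import Mathlib

/-! Everything comes from the indiscernibility of the rows `b̄_i`. A strictly increasing selection
of rows indexed by any finite linear order has the same type as any other, and parameters from
rows on which two selections agree are absorbed as shared coordinates. The rows `c̄_i` are the
consecutive pairs `(b̄_{2i}, b̄_{2i+1})` with their halves picked crosswise, so they are
indiscernible; the tail `(b_{2k+1,0})_{k ≥ i}` lies beyond the rows `b̄_{≤2i}`, which contain
`c̄_{<i}` and `c_{i,1}`; and over `b̄_{<2i} ⊇ c̄_{<i}` we have
`c_{i,0} = b_{2i+1,0} ≡ b_{2i+1,1} ≡ b_{2i,1} = c_{i,1}`. -/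

open FirstOrder Language

universe u v w

variable {L : FirstOrder.Language.{u, v}}

/-- Tuples `a, b : γ → M` have the same type over the parameter set `A ⊆ M`. -/
def SameTypeOver {M : Type w} [L.Structure M] {γ : Type*} (A : Set M)
    (a b : γ → M) : Prop :=
  ∀ (n : ℕ) (cpar : Fin n → M), (∀ i, cpar i ∈ A) →
    ∀ φ : L.Formula (γ ⊕ Fin n),
      φ.Realize (Sum.elim a cpar) ↔ φ.Realize (Sum.elim b cpar)

/-- The sequence of tuples `(c i)_{i<ω}` is indiscernible over the set `A`. -/
def IndiscernibleOver {M : Type w} [L.Structure M] {γ : Type*} (A : Set M)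
    (c : ℕ → γ → M) : Prop :=
  ∀ (n : ℕ) (s t : Fin n → ℕ), StrictMono s → StrictMono t →
    SameTypeOver (L := L) A (fun p : Fin n × γ => c (s p.1) p.2)
      (fun p : Fin n × γ => c (t p.1) p.2)

/-- The formula `φ(x; y)` witnesses SOP₁ in `M` (the monster model), via the tree
definition: a binary tree of parameter tuples whose branches are consistent
(realized), with the characteristic SOP₁ inconsistency condition. -/
def SOP1Formula {α γ : Type*} (M : Type w) [L.Structure M]
    (φ : L.Formula (α ⊕ γ)) : Prop :=
  ∃ a : List Bool → γ → M,
    (∀ η : ℕ → Bool, ∃ x : α → M, ∀ n : ℕ,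
        φ.Realize (Sum.elim x (a (List.ofFn fun i : Fin n => η i)))) ∧
    (∀ ν η : List Bool, (ν ++ [false]) <+: η →
        ¬ ∃ x : α → M, φ.Realize (Sum.elim x (a η)) ∧
            φ.Realize (Sum.elim x (a (ν ++ [true]))))

/-- `M` is a monster model: every type (in countably many variables) over any
parameter set which is finitely realized in `M` is realized in `M`. -/
def MonsterSaturated (M : Type w) [L.Structure M] : Prop :=
  ∀ (β : Type w) (S : Set (L.Formula (ℕ ⊕ β))) (e : β → M),
    (∀ s : Finset (L.Formula (ℕ ⊕ β)), ↑s ⊆ S →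
      ∃ x : ℕ → M, ∀ φ ∈ s, φ.Realize (Sum.elim x e)) →
    ∃ x : ℕ → M, ∀ φ ∈ S, φ.Realize (Sum.elim x e)

/-- The set of elements appearing in the rows `c̄_k` for `k < i` of an array. -/
def rowsLT {M : Type w} {γ : Type*} (c : ℕ → Bool → γ → M) (i : ℕ) : Set M :=
  ⋃ k < i, (Set.range (c k false) ∪ Set.range (c k true))

namespace SameTypeOver

variable {M : Type w} [L.Structure M] {γ δ : Type*} {A B : Set M} {a b d : γ → M}

theorem trans (hab : SameTypeOver (L := L) A a b) (hbd : SameTypeOver (L := L) A b d) :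
    SameTypeOver (L := L) A a d :=
  fun n cpar hc ψ => (hab n cpar hc ψ).trans (hbd n cpar hc ψ)

theorem mono (h : SameTypeOver (L := L) A a b) (hBA : B ⊆ A) : SameTypeOver (L := L) B a b :=
  fun n cpar hc ψ => h n cpar (fun i => hBA (hc i)) ψ

theorem comp (h : SameTypeOver (L := L) A a b) (r : δ → γ) :
    SameTypeOver (L := L) A (a ∘ r) (b ∘ r) := by
  intro n cpar hc ψ
  have := h n cpar hc (ψ.relabel (Sum.map r id))
  simpa only [Formula.realize_relabel, Sum.elim_comp_map, Function.comp_id] using this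

theorem of_empty (h : SameTypeOver (L := L) ∅ a b)
    (hA : ∀ x ∈ A, ∃ p, a p = x ∧ b p = x) :
    SameTypeOver (L := L) A a b := by
  intro n cpar hc ψ
  choose coord hcoord using fun j => hA (cpar j) (hc j)
  have h0 := h 0 Fin.elim0 Fin.elim0 (ψ.relabel (Sum.inl ∘ Sum.elim id coord))
  have hval : ∀ e : γ → M, (∀ j, e (coord j) = cpar j) →
      Sum.elim e Fin.elim0 ∘ Sum.inl ∘ Sum.elim id coord = Sum.elim e cpar := by
    intro e he
    funext x
    cases x with
    | inl g => rfl
    | inr j => exact he j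
  rwa [Formula.realize_relabel, Formula.realize_relabel, hval a fun j => (hcoord j).1,
    hval b fun j => (hcoord j).2] at h0

end SameTypeOver

namespace IndiscernibleOver

variable {M : Type w} [L.Structure M] {γ δ : Type*} {A : Set M} {c : ℕ → γ → M}

theorem comp (hc : IndiscernibleOver (L := L) A c) (ρ : δ → γ) :
    IndiscernibleOver (L := L) A (fun k => c k ∘ ρ) :=
  fun n s t hs ht => (hc n s t hs ht).comp (Prod.map id ρ)

theorem mono {B : Set M} (hc : IndiscernibleOver (L := L) A c) (hBA : B ⊆ A) :
    IndiscernibleOver (L := L) B c :=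
  fun n s t hs ht => (hc n s t hs ht).mono hBA

theorem sameTypeOver (hc : IndiscernibleOver (L := L) A c) (j j' : ℕ) :
    SameTypeOver (L := L) A (c j) (c j') :=
  (hc 1 (fun _ => j) (fun _ => j') (Subsingleton.strictMono _)
    (Subsingleton.strictMono _)).comp fun g => (0, g)

theorem sameTypeOver_of_strictMono {ι : Type*} [Fintype ι] [LinearOrder ι]
    (hc : IndiscernibleOver (L := L) A c) {s t : ι → ℕ} (hs : StrictMono s)
    (ht : StrictMono t) :
    SameTypeOver (L := L) A (fun p : ι × γ => c (s p.1) p.2)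
      (fun p : ι × γ => c (t p.1) p.2) := by
  let e := monoEquivOfFin ι rfl
  have := (hc _ (s ∘ e) (t ∘ e) (hs.comp e.strictMono) (ht.comp e.strictMono)).comp
    (Prod.map e.symm id)
  convert this using 2 <;> simp

theorem pairs (hc : IndiscernibleOver (L := L) A c) :
    IndiscernibleOver (L := L) A (fun i (p : Bool × γ) => c (2 * i + p.1.toNat) p.2) := by
  intro n s t hs ht
  have hpair : ∀ u : Fin n → ℕ, StrictMono u →
      StrictMono fun q : Fin n ×ₗ Bool => 2 * u (ofLex q).1 + (ofLex q).2.toNat := by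
    intro u hu q q' h
    dsimp only
    rcases Prod.Lex.lt_iff.1 h with hj | ⟨hj, he⟩
    · have := hu hj
      have := Bool.toNat_le (ofLex q).2
      omega
    · obtain ⟨hq, hq'⟩ := Bool.lt_iff.1 he
      simp [hj, hq, hq']
  exact (hc.sameTypeOver_of_strictMono (hpair s hs) (hpair t ht)).comp
    fun p : Fin n × (Bool × γ) => (toLex (p.1, p.2.1), p.2.2)

theorem tail (hc : IndiscernibleOver (L := L) (∅ : Set M) c) {m : ℕ} {σ : ℕ → ℕ}
    (hσ : StrictMono σ) (hm : ∀ k, m ≤ σ k) :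
    IndiscernibleOver (L := L) (⋃ k < m, Set.range (c k)) (fun k => c (σ k)) := by
  intro n s t hs ht
  have hprefix : ∀ u : Fin n → ℕ, StrictMono u →
      StrictMono fun q : Fin m ⊕ₗ Fin n => Sum.elim Fin.val (σ ∘ u) (ofLex q) := by
    rintro u hu (k | j) (k' | j') h <;> dsimp only
    · exact (Sum.Lex.inl_lt_inl_iff (α := Fin m) (β := Fin n)).1 h
    · exact k.isLt.trans_le (hm _)
    · exact absurd h Sum.Lex.not_inr_lt_inl
    · exact hσ (hu (Sum.Lex.inr_lt_inr_iff.1 h))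
  refine ((hc.sameTypeOver_of_strictMono (hprefix s hs) (hprefix t ht)).of_empty ?_).comp
    fun p : Fin n × γ => (toLex (Sum.inr p.1), p.2)
  simp only [Set.mem_iUnion, Set.mem_range]
  rintro _ ⟨k, hk, g, rfl⟩
  exact ⟨(toLex (Sum.inl ⟨k, hk⟩), g), rfl, rfl⟩

end IndiscernibleOver

section Rows

variable {M : Type w} {γ : Type*}

theorem mem_rowsLT {c : ℕ → Bool → γ → M} {i : ℕ} {x : M} :
    x ∈ rowsLT c i ↔ ∃ k < i, ∃ e g, c k e g = x := by
  simp [rowsLT, Bool.exists_bool]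

theorem rowsLT_eq_iUnion_range (c : ℕ → Bool → γ → M) (i : ℕ) :
    rowsLT c i = ⋃ k < i, Set.range fun p : Bool × γ => c k p.1 p.2 := by
  ext x
  simp [mem_rowsLT]

theorem rowsLT_mono (c : ℕ → Bool → γ → M) {i j : ℕ} (hij : i ≤ j) :
    rowsLT c i ⊆ rowsLT c j := by
  intro x hx
  obtain ⟨k, hk, e, g, rfl⟩ := mem_rowsLT.1 hx
  exact mem_rowsLT.2 ⟨k, hk.trans_le hij, e, g, rfl⟩

theorem range_subset_rowsLT (c : ℕ → Bool → γ → M) {k i : ℕ} (hk : k < i) (e : Bool) :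
    Set.range (c k e) ⊆ rowsLT c i := by
  rintro _ ⟨g, rfl⟩
  exact mem_rowsLT.2 ⟨k, hk, e, g, rfl⟩

theorem rowsLT_subset_of_reindex {b c : ℕ → Bool → γ → M}
    (hc0 : ∀ i, c i false = b (2 * i + 1) false) (hc1 : ∀ i, c i true = b (2 * i) true)
    (i : ℕ) : rowsLT c i ⊆ rowsLT b (2 * i) := by
  intro x hx
  obtain ⟨k, hk, e, g, rfl⟩ := mem_rowsLT.1 hx
  cases e
  · exact mem_rowsLT.2 ⟨2 * k + 1, by omega, false, g, by rw [hc0]⟩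
  · exact mem_rowsLT.2 ⟨2 * k, by omega, true, g, by rw [hc1]⟩

end Rows

theorem sop1_reindexed_array_general {M : Type w} [L.Structure M] {α γ : Type*}
    (φ : L.Formula (α ⊕ γ)) (b : ℕ → Bool → γ → M)
    (hbind : IndiscernibleOver (L := L) (∅ : Set M)
      (fun i (p : Bool × γ) => b i p.1 p.2))
    (hbcons : ∃ x : α → M, ∀ i, φ.Realize (Sum.elim x (b i false)))
    (hb2inc : ∀ i j, i ≠ j → ¬ ∃ x : α → M,
      φ.Realize (Sum.elim x (b i true)) ∧ φ.Realize (Sum.elim x (b j true)))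
    (hbsame : ∀ i, SameTypeOver (L := L) (rowsLT b i) (b i false) (b i true))
    (c : ℕ → Bool → γ → M)
    (hc0 : ∀ i, c i false = b (2 * i + 1) false)
    (hc1 : ∀ i, c i true = b (2 * i) true) :
    -- (1) {φ(x; c_{i,0}) : i < ω} is consistent
    (∃ x : α → M, ∀ i, φ.Realize (Sum.elim x (c i false))) ∧
    -- (2) {φ(x; c_{i,1}) : i < ω} is 2-inconsistent
    (∀ i j, i ≠ j → ¬ ∃ x : α → M,
      φ.Realize (Sum.elim x (c i true)) ∧ φ.Realize (Sum.elim x (c j true))) ∧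
    -- (3) the sequence of rows (c̄_i) is indiscernible
    IndiscernibleOver (L := L) (∅ : Set M) (fun i (p : Bool × γ) => c i p.1 p.2) ∧
    -- (4) c_{i,0} ≡_{c̄_{<i}} c_{i,1}
    (∀ i, SameTypeOver (L := L) (rowsLT c i) (c i false) (c i true)) ∧
    -- (5) (c_{k,0})_{k ≥ i} is indiscernible over c̄_{<i} ∪ {c_{i,1}}
    (∀ i, IndiscernibleOver (L := L) (rowsLT c i ∪ Set.range (c i true))
      (fun k => c (i + k) false)) := by
  have hrows : (fun i (p : Bool × γ) => c i p.1 p.2) =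
      fun i p => b (2 * i + (!p.1).toNat) p.1 p.2 := by
    funext i ⟨e, g⟩
    cases e <;> simp [hc0, hc1]
  have hsub := rowsLT_subset_of_reindex hc0 hc1
  refine ⟨?_, ?_, ?_, fun i => ?_, fun i => ?_⟩
  · obtain ⟨x, hx⟩ := hbcons
    exact ⟨x, fun i => hc0 i ▸ hx _⟩
  · rintro i j hij ⟨x, hi, hj⟩
    rw [hc1] at hi hj
    exact hb2inc _ _ (by omega) ⟨x, hi, hj⟩
  · rw [hrows]
    exact hbind.pairs.comp fun p => (!p.1, p)
  · have htail : IndiscernibleOver (L := L) (rowsLT b (2 * i))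
        fun k (p : Bool × γ) => b (2 * i + k) p.1 p.2 := by
      rw [rowsLT_eq_iUnion_range]
      exact hbind.tail (strictMono_id.const_add (2 * i)) (Nat.le_add_right _)
    have hnext := ((htail.sameTypeOver 1 0).comp fun g => (true, g)).mono (hsub i)
    rw [hc0, hc1]
    exact ((hbsame _).mono ((hsub i).trans (rowsLT_mono b (by omega)))).trans hnext
  · have hparams : rowsLT c i ∪ Set.range (c i true) ⊆ rowsLT b (2 * i + 1) :=
      Set.union_subset ((hsub i).trans (rowsLT_mono b (by omega)))
        (hc1 i ▸ range_subset_rowsLT b (by omega) true)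
    simp only [hc0]
    refine IndiscernibleOver.mono ?_ hparams
    rw [rowsLT_eq_iUnion_range]
    have hodd : StrictMono fun k => 2 * (i + k) + 1 := fun k l h => by dsimp only; omega
    exact (hbind.tail hodd fun k => by omega).comp fun g => (false, g)

/-- proof of Lemma 1.4: from an indiscernible SOP₁-array `b`,
the re-indexed array `c_{i,0} = b_{2i+1,0}`, `c_{i,1} = b_{2i,1}` satisfies the
strengthened conditions (1)-(5). -/
theorem sop1_reindexed_array {M : Type w} [L.Structure M] {α γ : Type*}
    (T : L.Theory) (hT : T.IsComplete) (hM : M ⊨ T)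
    (φ : L.Formula (α ⊕ γ)) (b : ℕ → Bool → γ → M)
    (hbind : IndiscernibleOver (L := L) (∅ : Set M)
      (fun i (p : Bool × γ) => b i p.1 p.2))
    (hbcons : ∃ x : α → M, ∀ i, φ.Realize (Sum.elim x (b i false)))
    (hb2inc : ∀ i j, i ≠ j → ¬ ∃ x : α → M,
      φ.Realize (Sum.elim x (b i true)) ∧ φ.Realize (Sum.elim x (b j true)))
    (hbsame : ∀ i, SameTypeOver (L := L) (rowsLT b i) (b i false) (b i true))
    (c : ℕ → Bool → γ → M)
    (hc0 : ∀ i, c i false = b (2 * i + 1) false)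
    (hc1 : ∀ i, c i true = b (2 * i) true) :
    -- (1) {φ(x; c_{i,0}) : i < ω} is consistent
    (∃ x : α → M, ∀ i, φ.Realize (Sum.elim x (c i false))) ∧
    -- (2) {φ(x; c_{i,1}) : i < ω} is 2-inconsistent
    (∀ i j, i ≠ j → ¬ ∃ x : α → M,
      φ.Realize (Sum.elim x (c i true)) ∧ φ.Realize (Sum.elim x (c j true))) ∧
    -- (3) the sequence of rows (c̄_i) is indiscernible
    IndiscernibleOver (L := L) (∅ : Set M) (fun i (p : Bool × γ) => c i p.1 p.2) ∧
    -- (4) c_{i,0} ≡_{c̄_{<i}} c_{i,1}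
    (∀ i, SameTypeOver (L := L) (rowsLT c i) (c i false) (c i true)) ∧
    -- (5) (c_{k,0})_{k ≥ i} is indiscernible over c̄_{<i} ∪ {c_{i,1}}
    (∀ i, IndiscernibleOver (L := L) (rowsLT c i ∪ Set.range (c i true))
      (fun k => c (i + k) false)) :=
  sop1_reindexed_array_general φ b hbind hbcons hb2inc hbsame c hc0 hc1
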